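/- arXiv:2205.13492 — 2 statements merged into one kernel-verified Lean document; each statement's English description precedes it below -/
import Mathlib

section
/- In the subset neighborhood sampler (Gumbel-top-K with parameters φ_1, …, φ_N over candidate neighbors of a fixed node), let μ_i = P(i ∈ S_K) = σ(φ_i − log ∑_{m ∈ M_i^K} e^{φ_m}) where M_i^K is the set of indices of the N−K smallest scores among {φ_j : j ≠ i}. Then for any two indices i, j: μ_i ≥ μ_j if and only if φ_i ≥ φ_j. In particular the K indices with the largest inclusion probabilities μ coincide with the K indices with the largest scores φ. -/
open Finset

/-- Logistic sigmoid. -/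
noncomputable def sigmoid (x : ℝ) : ℝ := 1 / (1 + Real.exp (-x))

lemma sigmoid_strictMono : StrictMono sigmoid := by
  intro x y hxy
  unfold sigmoid
  have h1 : (0:ℝ) < 1 + Real.exp (-y) := by positivity
  have h2 : (0:ℝ) < 1 + Real.exp (-x) := by positivity
  rw [div_lt_div_iff₀ h2 h1]
  have := Real.exp_lt_exp.mpr (neg_lt_neg hxy)
  nlinarith

lemma sns_key {N : ℕ} (φ : Fin N → ℝ)
    (Mi Mj : Finset (Fin N)) (i j : Fin N)
    (hiMi : i ∉ Mi) (hjMj : j ∉ Mj)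
    (hcard : Mi.card = Mj.card)
    (hMi : ∀ m ∈ Mi, ∀ x, x ∉ Mi → x ≠ i → φ m < φ x)
    (hMj : ∀ m ∈ Mj, ∀ x, x ∉ Mj → x ≠ j → φ m < φ x)
    (hne : Mi.Nonempty)
    (hij : φ j < φ i) :
    Real.exp (φ j) * ∑ m ∈ Mi, Real.exp (φ m) <
      Real.exp (φ i) * ∑ m ∈ Mj, Real.exp (φ m) := by
  have hji : j ≠ i := fun h => absurd (congrArg φ h) (ne_of_lt hij)
  have hABcard : (Mi \ Mj).card = (Mj \ Mi).card := Finset.card_sdiff_comm hcard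
  have hdich : ∀ a ∈ Mi \ Mj, ∀ b ∈ Mj \ Mi, a = j ∨ b = i := by
    intro a ha b hb
    by_contra h
    push_neg at h
    obtain ⟨haj, hbi⟩ := h
    have h1 : φ b < φ a := hMj b (Finset.mem_sdiff.mp hb).1 a (Finset.mem_sdiff.mp ha).2 haj
    have h2 : φ a < φ b := hMi a (Finset.mem_sdiff.mp ha).1 b (Finset.mem_sdiff.mp hb).2 hbi
    linarith
  have hdec1 : (∑ m ∈ Mi ∩ Mj, Real.exp (φ m)) + ∑ m ∈ Mi \ Mj, Real.exp (φ m)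
      = ∑ m ∈ Mi, Real.exp (φ m) := Finset.sum_inter_add_sum_sdiff Mi Mj _
  have hdec2 : (∑ m ∈ Mi ∩ Mj, Real.exp (φ m)) + ∑ m ∈ Mj \ Mi, Real.exp (φ m)
      = ∑ m ∈ Mj, Real.exp (φ m) := by
    rw [Finset.inter_comm]
    exact Finset.sum_inter_add_sum_sdiff Mj Mi _
  have hSCnn : 0 ≤ ∑ m ∈ Mi ∩ Mj, Real.exp (φ m) :=
    Finset.sum_nonneg fun _ _ => (Real.exp_pos _).le
  -- case on the cardinality of Mi \ Mj
  rcases Nat.lt_or_ge (Mi \ Mj).card 2 with hlt2 | hge2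
  · have h01 : (Mi \ Mj).card = 0 ∨ (Mi \ Mj).card = 1 := by omega
    rcases h01 with h | h
    · -- Mi = Mj
      have hBc : (Mj \ Mi).card = 0 := by rw [← hABcard, h]
      have hA : Mi \ Mj = ∅ := Finset.card_eq_zero.mp h
      have hB : Mj \ Mi = ∅ := Finset.card_eq_zero.mp hBc
      have hMeq : Mi = Mj :=
        Finset.Subset.antisymm (Finset.sdiff_eq_empty_iff_subset.mp hA)
          (Finset.sdiff_eq_empty_iff_subset.mp hB)
      rw [← hMeq]
      have hpos : 0 < ∑ m ∈ Mi, Real.exp (φ m) :=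
        Finset.sum_pos (fun _ _ => Real.exp_pos _) hne
      exact mul_lt_mul_of_pos_right (Real.exp_lt_exp.mpr hij) hpos
    · -- singletons
      have hBc : (Mj \ Mi).card = 1 := by rw [← hABcard, h]
      obtain ⟨a, hA⟩ := Finset.card_eq_one.mp h
      obtain ⟨b, hB⟩ := Finset.card_eq_one.mp hBc
      have haA : a ∈ Mi \ Mj := hA ▸ Finset.mem_singleton_self a
      have hbB : b ∈ Mj \ Mi := hB ▸ Finset.mem_singleton_self b
      have haMi := (Finset.mem_sdiff.mp haA).1
      have haMj := (Finset.mem_sdiff.mp haA).2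
      have hbMj := (Finset.mem_sdiff.mp hbB).1
      have hbMi := (Finset.mem_sdiff.mp hbB).2
      by_cases haj : a = j
      · -- a = j : then φ j < φ b
        subst haj
        have hjb : φ a < φ b := by
          by_cases hbi : b = i
          · exact hbi ▸ hij
          · exact hMi a haMi b hbMi hbi
        rw [← hdec1, ← hdec2, hA, hB, Finset.sum_singleton, Finset.sum_singleton]
        have e1 := Real.exp_pos (φ a)
        have e2 := Real.exp_pos (φ b)
        have e3 := Real.exp_pos (φ i)
        have h4 : Real.exp (φ a) < Real.exp (φ i) := Real.exp_lt_exp.mpr hij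
        have h5 : Real.exp (φ a) < Real.exp (φ b) := Real.exp_lt_exp.mpr hjb
        nlinarith
      · -- a ≠ j : then b = i, contradiction
        exfalso
        have hbi : b = i := (hdich a haA b hbB).resolve_left haj
        subst hbi
        have hjMi : j ∉ Mi := by
          intro hj
          exact haj (Finset.mem_singleton.mp (hA ▸ Finset.mem_sdiff.mpr ⟨hj, hjMj⟩)).symm
        have h1 : φ a < φ j := hMi a haMi j hjMi hji
        have h2 : φ b < φ a := hMj b hbMj a haMj haj
        linarith
  · -- card ≥ 2 : contradiction
    exfalso
    have hge2' : 1 < (Mj \ Mi).card := by rw [← hABcard]; exact hge2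
    obtain ⟨a, a', ha, ha', haa'⟩ := Finset.one_lt_card_iff.mp hge2
    obtain ⟨b, b', hb, hb', hbb'⟩ := Finset.one_lt_card_iff.mp hge2'
    -- pick an element of Mi \ Mj different from j, and one of Mj \ Mi different from i
    have hAex : ∃ c ∈ Mi \ Mj, c ≠ j := by
      by_cases h : a = j
      · exact ⟨a', ha', fun h' => haa' (h.trans h'.symm)⟩
      · exact ⟨a, ha, h⟩
    have hBex : ∃ c ∈ Mj \ Mi, c ≠ i := by
      by_cases h : b = i
      · exact ⟨b', hb', fun h' => hbb' (h.trans h'.symm)⟩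
      · exact ⟨b, hb, h⟩
    obtain ⟨c, hc, hcj⟩ := hAex
    obtain ⟨d, hd, hdi⟩ := hBex
    rcases hdich c hc d hd with h | h
    · exact hcj h
    · exact hdi h

/-- For the subset neighborhood sampler, the inclusion probabilities
`μ i = σ(φ i - log ∑_{m ∈ M_i^K} e^{φ m})` are ordered consistently with the
scores: `μ i ≥ μ j ↔ φ i ≥ φ j`; in particular the top-`K` indices w.r.t. `μ`
coincide with the top-`K` indices w.r.t. `φ`. -/
theorem sns_inclusion_prob_monotone {N K : ℕ} (hK : K ≤ N)
    (φ : Fin N → ℝ) (hdist : Function.Injective φ)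
    (M : Fin N → Finset (Fin N))
    (hiM : ∀ i, i ∉ M i) (hMcard : ∀ i, (M i).card = N - K)
    (hMsmall : ∀ i, ∀ m ∈ M i, ∀ j, j ∉ M i → j ≠ i → φ m < φ j)
    (μ : Fin N → ℝ)
    (hμ : ∀ i, μ i = sigmoid (φ i - Real.log (∑ m ∈ M i, Real.exp (φ m)))) :
    (∀ i j, μ i ≥ μ j ↔ φ i ≥ φ j) ∧
    (∀ T : Finset (Fin N), T.card = K →
      ((∀ i ∈ T, ∀ j ∉ T, μ j < μ i) ↔ (∀ i ∈ T, ∀ j ∉ T, φ j < φ i))) := by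
  set f : Fin N → ℝ := fun i => φ i - Real.log (∑ m ∈ M i, Real.exp (φ m)) with hf
  have hstrict : ∀ i j : Fin N, φ j < φ i → f j < f i := by
    intro i j hij
    rcases Nat.eq_zero_or_pos (N - K) with h0 | hpos
    · have hMe : ∀ k, M k = ∅ := fun k => Finset.card_eq_zero.mp (h0 ▸ hMcard k)
      simp only [hf, hMe, Finset.sum_empty, Real.log_zero, sub_zero]
      exact hij
    · have hMne : ∀ k : Fin N, (M k).Nonempty := fun k =>
        Finset.card_pos.mp ((hMcard k) ▸ hpos)
      have hSpos : ∀ k : Fin N, 0 < ∑ m ∈ M k, Real.exp (φ m) := fun k =>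
        Finset.sum_pos (fun _ _ => Real.exp_pos _) (hMne k)
      have := sns_key φ (M i) (M j) i j (hiM i) (hiM j)
        ((hMcard i).trans (hMcard j).symm) (hMsmall i) (hMsmall j) (hMne i) hij
      rw [← Real.exp_lt_exp]
      simp only [hf]
      rw [Real.exp_sub, Real.exp_sub, Real.exp_log (hSpos j), Real.exp_log (hSpos i),
        div_lt_div_iff₀ (hSpos j) (hSpos i)]
      linarith
  have hle : ∀ i j : Fin N, μ i ≥ μ j ↔ φ i ≥ φ j := by
    intro i j
    rw [hμ i, hμ j, ge_iff_le, ge_iff_le]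
    have : sigmoid (f j) ≤ sigmoid (f i) ↔ f j ≤ f i := sigmoid_strictMono.le_iff_le
    rw [this]
    constructor
    · intro h
      by_contra hc
      push_neg at hc
      exact absurd h (not_le.mpr (hstrict j i hc))
    · intro h
      rcases eq_or_lt_of_le h with heq | hlt
      · rw [hdist heq]
      · exact (hstrict i j hlt).le
  have hlt : ∀ i j : Fin N, μ j < μ i ↔ φ j < φ i := fun i j =>
    lt_iff_lt_of_le_iff_le (hle j i)
  refine ⟨hle, fun T hT => ?_⟩
  exact ⟨fun h i hi j hj => (hlt i j).mp (h i hi j hj),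
    fun h i hi j hj => (hlt i j).mpr (h i hi j hj)⟩
end

section
/- Optimal baseline for variance reduction: let X be a real random variable with E[X]=0 representing the score d/dθ log p_θ, and f a real random variable (the cost, jointly distributed with X). Among all constants β, the variance of (f − β)·X is minimized at β* = E[f·X²]/E[X²], provided E[X²] > 0 and all relevant moments are finite. Moreover, Var[(f − β̂)X] < Var[f·X] for any β̂ with 0 < β̂ < 2β* when β* > 0. -/
open MeasureTheory

/-- Variance of a real random variable (as `E[Y²] - (E[Y])²`). -/
noncomputable def var' {Ω : Type*} [MeasurableSpace Ω] (μ : Measure Ω)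
    (Y : Ω → ℝ) : ℝ := (∫ ω, (Y ω) ^ 2 ∂μ) - (∫ ω, Y ω ∂μ) ^ 2

lemma var_formula {Ω : Type*} [MeasurableSpace Ω] (μ : Measure Ω)
    [IsProbabilityMeasure μ] (X f : Ω → ℝ)
    (hX : Integrable X μ) (hX2 : Integrable (fun ω => (X ω) ^ 2) μ)
    (hfX : Integrable (fun ω => f ω * X ω) μ)
    (hfX2 : Integrable (fun ω => f ω * (X ω) ^ 2) μ)
    (hf2X2 : Integrable (fun ω => (f ω) ^ 2 * (X ω) ^ 2) μ)
    (hEX : (∫ ω, X ω ∂μ) = 0) (β : ℝ) :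
    var' μ (fun ω => (f ω - β) * X ω)
      = (∫ ω, (f ω) ^ 2 * (X ω) ^ 2 ∂μ) - 2 * β * (∫ ω, f ω * (X ω) ^ 2 ∂μ)
        + β ^ 2 * (∫ ω, (X ω) ^ 2 ∂μ) - (∫ ω, f ω * X ω ∂μ) ^ 2 := by
  have h1 : (∫ ω, ((f ω - β) * X ω) ^ 2 ∂μ)
      = (∫ ω, (f ω) ^ 2 * (X ω) ^ 2 ∂μ) - 2 * β * (∫ ω, f ω * (X ω) ^ 2 ∂μ)
        + β ^ 2 * (∫ ω, (X ω) ^ 2 ∂μ) := by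
    have : (fun ω => ((f ω - β) * X ω) ^ 2)
        = fun ω => ((f ω) ^ 2 * (X ω) ^ 2 - (2 * β) * (f ω * (X ω) ^ 2))
            + β ^ 2 * (X ω) ^ 2 := by funext ω; ring
    rw [this, integral_add (by exact (hf2X2.sub (hfX2.const_mul _))) (hX2.const_mul _),
      integral_sub hf2X2 (hfX2.const_mul _), integral_const_mul, integral_const_mul]
  have h2 : (∫ ω, (f ω - β) * X ω ∂μ) = ∫ ω, f ω * X ω ∂μ := by
    have : (fun ω => (f ω - β) * X ω) = fun ω => f ω * X ω - β * X ω := by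
      funext ω; ring
    rw [this, integral_sub hfX (hX.const_mul _), integral_const_mul, hEX, mul_zero,
      sub_zero]
  simp only [var', h1, h2]

/-- Optimal baseline: among all constants `β`, the variance of `(f - β)·X` is
minimized at `β* = E[f X²]/E[X²]` (with `E[X] = 0`), and any `β̂` with
`0 < β̂ < 2β*` (for `β* > 0`) strictly reduces the variance w.r.t. no baseline. -/
theorem optimal_baseline {Ω : Type*} [MeasurableSpace Ω] (μ : Measure Ω)
    [IsProbabilityMeasure μ] (X f : Ω → ℝ)
    (hX : Integrable X μ) (hX2 : Integrable (fun ω => (X ω) ^ 2) μ)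
    (hfX : Integrable (fun ω => f ω * X ω) μ)
    (hfX2 : Integrable (fun ω => f ω * (X ω) ^ 2) μ)
    (hf2X2 : Integrable (fun ω => (f ω) ^ 2 * (X ω) ^ 2) μ)
    (hEX : (∫ ω, X ω ∂μ) = 0)
    (hEX2pos : 0 < ∫ ω, (X ω) ^ 2 ∂μ)
    (βstar : ℝ) (hβstar : βstar = (∫ ω, f ω * (X ω) ^ 2 ∂μ) / (∫ ω, (X ω) ^ 2 ∂μ)) :
    (∀ β : ℝ, var' μ (fun ω => (f ω - βstar) * X ω)
        ≤ var' μ (fun ω => (f ω - β) * X ω)) ∧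
    (0 < βstar → ∀ βhat : ℝ, 0 < βhat → βhat < 2 * βstar →
      var' μ (fun ω => (f ω - βhat) * X ω) < var' μ (fun ω => f ω * X ω)) := by
  have hform := var_formula μ X f hX hX2 hfX hfX2 hf2X2 hEX
  set S := ∫ ω, (X ω) ^ 2 ∂μ with hS
  set T := ∫ ω, f ω * (X ω) ^ 2 ∂μ with hT
  have hST : βstar * S = T := by
    rw [hβstar]; field_simp
  constructor
  · intro β
    rw [hform, hform, ← hST]
    nlinarith [mul_nonneg hEX2pos.le (sq_nonneg (β - βstar))]
  · intro hpos βhat h1 h2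
    have h0 : var' μ (fun ω => f ω * X ω) = var' μ (fun ω => (f ω - 0) * X ω) := by
      simp
    rw [h0, hform, hform, ← hST]
    nlinarith [hEX2pos, mul_pos h1 (sub_pos.mpr h2)]
end
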